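/- arXiv:1406.7594 — 5 statements merged into one kernel-verified Lean document; each statement's English description precedes it below -/
import Mathlib

section
/- Let $A_n$ be the $n\times n$ symmetric matrix with entries $a_{jj}=6$, $a_{j,j\pm1}=-4$, $a_{j,j\pm2}=1$, plus additional entries $a_{1,n}=a_{n,1}=1$ (i.e., the pentadiagonal Toeplitz matrix with symbol $6-4(t+t^{-1})+(t^2+t^{-2})$ perturbed by $1$ in the upper-right and lower-left corners). Then for all $n\ge 5$, $\det A_n = (n+1)^3$. -/
open Matrix Finset

namespace Stmt0Aux

variable (n : ℕ)

noncomputable def ee (a : ℤ) (k : Fin n) : ℝ := if (k : ℤ) = a then 1 else 0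

noncomputable def c (a b : ℤ) : ℝ := if a = b ∧ 0 ≤ a ∧ a < n then 1 else 0

lemma sum_e (a : ℤ) : ∑ k : Fin n, ee n a k = if 0 ≤ a ∧ a < n then 1 else 0 := by
  by_cases h : 0 ≤ a ∧ a < n
  · rw [if_pos h]
    have hk : a.toNat < n := by omega
    rw [Finset.sum_eq_single (⟨a.toNat, hk⟩ : Fin n)]
    · simp only [ee]; rw [if_pos (by simp; omega)]
    · intro b _ hb
      simp only [ee]
      rw [if_neg]
      intro hba
      apply hb
      apply Fin.ext
      simp only []
      omega
    · intro h'; exact absurd (Finset.mem_univ _) h'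
  · rw [if_neg h]
    apply Finset.sum_eq_zero
    intro k _
    simp only [ee]
    rw [if_neg]
    intro hk
    have := k.isLt
    omega

lemma sum_ee' (a b : ℤ) :
    ∑ k : Fin n, ee n a k * ee n b k = c n a b := by
  simp only [c]
  by_cases hab : a = b
  · subst hab
    have : ∀ k : Fin n, ee n a k * ee n a k = ee n a k := by
      intro k; simp only [ee]; split_ifs <;> norm_num
    rw [Finset.sum_congr rfl fun k _ => this k, sum_e]
    simp
  · rw [if_neg (by tauto)]
    apply Finset.sum_eq_zero
    intro k _
    simp only [ee]
    split_ifs with h1 h2 <;> try norm_num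
    omega

noncomputable def K : Matrix (Fin n) (Fin n) ℝ :=
  fun i j => if (i : ℤ) = (j : ℤ) then 2 else if |(i : ℤ) - (j : ℤ)| = 1 then -1 else 0

lemma K_symm (i j : Fin n) : K n i j = K n j i := by
  simp only [K, abs_sub_comm ((i:ℤ)) ((j:ℤ))]
  split_ifs <;> try rfl
  all_goals exfalso; omega

lemma K_eq (i k : Fin n) :
    K n i k = 2 * ee n ((i:ℤ)) k - ee n ((i:ℤ)-1) k - ee n ((i:ℤ)+1) k := by
  simp only [K, ee]
  have habs : |(i:ℤ) - (k:ℤ)| = 1 ↔ (i:ℤ) - k = 1 ∨ (i:ℤ) - k = -1 := abs_eq (by norm_num)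
  simp only [habs]
  split_ifs <;> try norm_num
  all_goals omega

noncomputable def s (i : Fin n) : ℝ := if (i:ℕ) = 0 ∨ (i:ℕ) = n - 1 then 1 else 0

lemma sum_K_row (hn : 2 ≤ n) (i : Fin n) : ∑ k, K n i k = s n i := by
  have hi := i.isLt
  rw [Finset.sum_congr rfl fun k _ => K_eq n i k]
  rw [Finset.sum_sub_distrib, Finset.sum_sub_distrib, ← Finset.mul_sum]
  rw [sum_e, sum_e, sum_e]
  simp only [s]
  split_ifs <;> try norm_num
  all_goals omega

lemma sum_K_col (hn : 2 ≤ n) (j : Fin n) : ∑ k, K n k j = s n j := by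
  rw [Finset.sum_congr rfl fun k _ => K_symm n k j]
  exact sum_K_row n hn j

lemma key (hn : 5 ≤ n) (i j : Fin n) :
    (∑ k, K n i k * K n k j) + s n i * s n j =
      if (i : ℤ) = (j : ℤ) then 6
      else if |(i : ℤ) - (j : ℤ)| = 1 then -4
      else if |(i : ℤ) - (j : ℤ)| = 2 then 1
      else if ((i : ℕ) = 0 ∧ (j : ℕ) = n - 1) ∨ ((i : ℕ) = n - 1 ∧ (j : ℕ) = 0) then 1
      else 0 := by
  have hi := i.isLt
  have hj := j.isLt
  have expand : ∀ k : Fin n, K n i k * K n k j =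
      4*(ee n ((i:ℤ)) k * ee n ((j:ℤ)) k) - 2*(ee n ((i:ℤ)) k * ee n ((j:ℤ)-1) k)
      - 2*(ee n ((i:ℤ)) k * ee n ((j:ℤ)+1) k) - 2*(ee n ((i:ℤ)-1) k * ee n ((j:ℤ)) k)
      + (ee n ((i:ℤ)-1) k * ee n ((j:ℤ)-1) k) + (ee n ((i:ℤ)-1) k * ee n ((j:ℤ)+1) k)
      - 2*(ee n ((i:ℤ)+1) k * ee n ((j:ℤ)) k) + (ee n ((i:ℤ)+1) k * ee n ((j:ℤ)-1) k)
      + (ee n ((i:ℤ)+1) k * ee n ((j:ℤ)+1) k) := by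
    intro k
    rw [K_symm n k j, K_eq n i k, K_eq n j k]
    ring
  rw [Finset.sum_congr rfl fun k _ => expand k]
  simp only [Finset.sum_add_distrib, Finset.sum_sub_distrib, ← Finset.mul_sum]
  simp only [sum_ee']
  have hab1 : |(i:ℤ) - (j:ℤ)| = 1 ↔ ((i:ℤ) - j = 1 ∨ (i:ℤ) - j = -1) := abs_eq (by norm_num)
  have hab2 : |(i:ℤ) - (j:ℤ)| = 2 ↔ ((i:ℤ) - j = 2 ∨ (i:ℤ) - j = -2) := abs_eq (by norm_num)
  simp only [hab1, hab2]
  have hcases : ((i:ℤ) = j ∧ (i:ℕ) = 0) ∨ ((i:ℤ) = j ∧ (i:ℕ) = n-1) ∨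
      ((i:ℤ) = j ∧ 0 < (i:ℕ) ∧ (i:ℕ) < n-1) ∨
      (i:ℤ) - j = 1 ∨ (i:ℤ) - j = -1 ∨ (i:ℤ) - j = 2 ∨ (i:ℤ) - j = -2 ∨
      ((i:ℕ) = 0 ∧ (j:ℕ) = n-1) ∨ ((i:ℕ) = n-1 ∧ (j:ℕ) = 0) ∨
      (3 ≤ (i:ℤ) - j ∧ ¬((i:ℕ) = n-1 ∧ (j:ℕ) = 0)) ∨
      ((i:ℤ) - j ≤ -3 ∧ ¬((i:ℕ) = 0 ∧ (j:ℕ) = n-1)) := by omega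
  rcases hcases with ⟨h1,h2⟩|⟨h1,h2⟩|⟨h1,h2,h3⟩|h1|h1|h1|h1|⟨h1,h2⟩|⟨h1,h2⟩|⟨h1,h2⟩|⟨h1,h2⟩ <;>
    simp (disch := omega) only [c, s, if_pos, if_neg]
  all_goals try norm_num
  all_goals omega

noncomputable def Lm : Matrix (Fin n) (Fin n) ℝ :=
  fun i k => if (i:ℤ) = k then 1
    else if (k:ℤ) = (i:ℤ)-1 then -((i:ℕ):ℝ)/(((i:ℕ):ℝ)+1) else 0

noncomputable def Um : Matrix (Fin n) (Fin n) ℝ :=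
  fun k j => if (k:ℤ) = j then (((k:ℕ):ℝ)+2)/(((k:ℕ):ℝ)+1)
    else if (j:ℤ) = (k:ℤ)+1 then -1 else 0

lemma Lm_eq (i k : Fin n) :
    Lm n i k = ee n ((i:ℤ)) k + (-((i:ℕ):ℝ)/(((i:ℕ):ℝ)+1)) * ee n ((i:ℤ)-1) k := by
  simp only [Lm, ee]
  split_ifs <;> try norm_num
  all_goals omega

lemma Um_eq (k j : Fin n) :
    Um n k j = ((((j:ℕ):ℝ)+2)/(((j:ℕ):ℝ)+1)) * ee n ((j:ℤ)) k + (-1) * ee n ((j:ℤ)-1) k := by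
  simp only [Um, ee]
  by_cases h1 : (k:ℤ) = j
  · have hkj : (k:ℕ) = (j:ℕ) := by omega
    rw [if_pos h1, if_pos h1, if_neg (by omega : ¬(k:ℤ) = (j:ℤ)-1), hkj]
    ring
  · rw [if_neg h1, if_neg h1]
    by_cases h2 : (j:ℤ) = (k:ℤ)+1
    · rw [if_pos h2, if_pos (by omega : (k:ℤ) = (j:ℤ)-1)]
      ring
    · rw [if_neg h2, if_neg (by omega : ¬(k:ℤ) = (j:ℤ)-1)]
      ring

lemma hLU (i j : Fin n) : K n i j = (Lm n * Um n) i j := by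
  have hi := i.isLt
  have hj := j.isLt
  rw [Matrix.mul_apply]
  have expand : ∀ k : Fin n, Lm n i k * Um n k j =
      ((((j:ℕ):ℝ)+2)/(((j:ℕ):ℝ)+1)) * (ee n ((i:ℤ)) k * ee n ((j:ℤ)) k)
      - (ee n ((i:ℤ)) k * ee n ((j:ℤ)-1) k)
      + ((-((i:ℕ):ℝ)/(((i:ℕ):ℝ)+1)) * ((((j:ℕ):ℝ)+2)/(((j:ℕ):ℝ)+1))) *
          (ee n ((i:ℤ)-1) k * ee n ((j:ℤ)) k)
      - (-((i:ℕ):ℝ)/(((i:ℕ):ℝ)+1)) * (ee n ((i:ℤ)-1) k * ee n ((j:ℤ)-1) k) := by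
    intro k
    rw [Lm_eq, Um_eq]
    ring
  rw [Finset.sum_congr rfl fun k _ => expand k]
  simp only [Finset.sum_add_distrib, Finset.sum_sub_distrib, ← Finset.mul_sum]
  simp only [sum_ee']
  have hab1 : |(i:ℤ) - (j:ℤ)| = 1 ↔ ((i:ℤ) - j = 1 ∨ (i:ℤ) - j = -1) := abs_eq (by norm_num)
  simp only [K, hab1]
  have hcases : ((i:ℤ) = j ∧ (i:ℕ) = 0) ∨ ((i:ℤ) = j ∧ 0 < (i:ℕ)) ∨
      (i:ℤ) - j = 1 ∨ (i:ℤ) - j = -1 ∨ 2 ≤ (i:ℤ) - j ∨ (i:ℤ) - j ≤ -2 := by omega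
  rcases hcases with ⟨h1,h2⟩|⟨h1,h2⟩|h1|h1|h1|h1 <;>
    simp (disch := omega) only [c, if_pos, if_neg]
  · have hj2 : (j:ℕ) = 0 := by omega
    rw [h2, hj2]
    norm_num
  · have hj2 : (j:ℕ) = (i:ℕ) := by omega
    have hx : ((i:ℕ):ℝ) + 1 ≠ 0 := by positivity
    rw [hj2]
    field_simp
    ring
  · have hi2 : (i:ℕ) = (j:ℕ) + 1 := by omega
    have hx : ((j:ℕ):ℝ) + 1 ≠ 0 := by positivity
    have hx2 : ((j:ℕ):ℝ) + 2 ≠ 0 := by positivity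
    rw [hi2]
    push_cast
    field_simp
    ring
  · norm_num
  · norm_num
  · norm_num

lemma prod_range (m : ℕ) :
    ∏ x ∈ Finset.range m, (((x:ℕ):ℝ)+2)/(((x:ℕ):ℝ)+1) = (m:ℝ) + 1 := by
  induction m with
  | zero => simp
  | succ m ih =>
    rw [Finset.prod_range_succ, ih]
    have hx : ((m:ℕ):ℝ) + 1 ≠ 0 := by positivity
    push_cast
    field_simp
    ring

lemma det_Lm : (Lm n).det = 1 := by
  rw [Matrix.det_of_lowerTriangular (Lm n)]
  · apply Finset.prod_eq_one
    intro i _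
    simp [Lm]
  · intro i j hij
    have : (i : Fin n) < j := hij
    simp only [Lm]
    rw [if_neg (by have := this; omega : ¬(i:ℤ) = (j:ℤ)), if_neg (by have := this; omega : ¬(j:ℤ) = (i:ℤ)-1)]

lemma det_Um : (Um n).det = (n:ℝ) + 1 := by
  rw [Matrix.det_of_upperTriangular]
  · have : ∀ k : Fin n, Um n k k = (((k:ℕ):ℝ)+2)/(((k:ℕ):ℝ)+1) := by
      intro k
      simp [Um]
    rw [Finset.prod_congr rfl fun k _ => this k]
    rw [Fin.prod_univ_eq_prod_range (fun x => (((x:ℕ):ℝ)+2)/(((x:ℕ):ℝ)+1)) n]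
    exact prod_range n
  · intro i j hij
    have : (j : Fin n) < i := hij
    simp only [Um]
    rw [if_neg (by have := this; omega : ¬(i:ℤ) = (j:ℤ)), if_neg (by have := this; omega : ¬(j:ℤ) = (i:ℤ)+1)]

lemma det_K : (K n).det = (n:ℝ) + 1 := by
  have : K n = Lm n * Um n := by
    ext i j
    exact hLU n i j
  rw [this, Matrix.det_mul, det_Lm, det_Um, one_mul]

noncomputable def Jm : Matrix (Fin n) (Fin n) ℝ :=
  Matrix.replicateCol Unit (fun _ => (1:ℝ)) * Matrix.replicateRow Unit (fun _ => (1:ℝ))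

lemma det_oneJ : (1 + Jm n).det = (n:ℝ) + 1 := by
  rw [Jm, Matrix.det_one_add_replicateCol_mul_replicateRow]
  simp [dotProduct]
  ring

end Stmt0Aux

open Stmt0Aux in
theorem stmt_0 (n : ℕ) (hn : 5 ≤ n)
    (A : Matrix (Fin n) (Fin n) ℝ)
    (hA : ∀ i j : Fin n, A i j =
      if (i : ℤ) = (j : ℤ) then 6
      else if |(i : ℤ) - (j : ℤ)| = 1 then -4
      else if |(i : ℤ) - (j : ℤ)| = 2 then 1
      else if ((i : ℕ) = 0 ∧ (j : ℕ) = n - 1) ∨ ((i : ℕ) = n - 1 ∧ (j : ℕ) = 0) then 1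
      else 0) :
    A.det = ((n : ℝ) + 1) ^ 3 := by
  have hn2 : 2 ≤ n := by omega
  have hKJ : ∀ i k : Fin n, (K n * (1 + Jm n)) i k = K n i k + s n i := by
    intro i k
    rw [Matrix.mul_apply]
    have hterm : ∀ p : Fin n, K n i p * (1 + Jm n) p k =
        (if p = k then K n i p else 0) + K n i p := by
      intro p
      have : (1 + Jm n) p k = (if p = k then 1 else 0) + 1 := by
        simp [Jm, Matrix.one_apply, Matrix.mul_apply, Matrix.replicateCol_apply, Matrix.replicateRow_apply, Finset.univ_unique]
      rw [this, mul_add, mul_one, mul_ite, mul_one, mul_zero]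
    rw [Finset.sum_congr rfl fun p _ => hterm p, Finset.sum_add_distrib,
      Finset.sum_ite_eq' Finset.univ k (K n i), if_pos (Finset.mem_univ k),
      sum_K_row n hn2 i]
  have hfact : A = K n * (1 + Jm n) * K n := by
    ext i j
    rw [hA i j, Matrix.mul_apply]
    rw [Finset.sum_congr rfl fun k _ => by rw [hKJ i k]]
    simp only [add_mul]
    rw [Finset.sum_add_distrib, ← Finset.mul_sum, sum_K_col n hn2 j]
    exact (key n hn i j).symm
  rw [hfact, Matrix.det_mul, Matrix.det_mul, det_K, det_oneJ]
  ring
end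

section
/- Let $T_n$ be the $n\times n$ pentadiagonal Toeplitz matrix with diagonal entries $6$, entries $-4$ on the first off-diagonals, and $1$ on the second off-diagonals. Then $\det T_n = (n+1)(n+2)^2(n+3)/12$ for all $n\ge 1$. -/
noncomputable def lfun (i : ℕ) : ℝ := -2 * i / (i + 2)
noncomputable def mfun (i : ℕ) : ℝ := ((i : ℝ) - 1) * i / ((i + 1) * (i + 2))
noncomputable def dfun (i : ℕ) : ℝ := ((i : ℝ) + 3) * (i + 4) / ((i + 1) * (i + 2))
noncomputable def ufun (i : ℕ) : ℝ := -2 * ((i : ℝ) + 4) / (i + 2)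

noncomputable def Lmat (n : ℕ) : Matrix (Fin n) (Fin n) ℝ := fun i j =>
  if (i : ℕ) = j then 1
  else if (i : ℕ) = (j : ℕ) + 1 then lfun i
  else if (i : ℕ) = (j : ℕ) + 2 then mfun i
  else 0

noncomputable def Umat (n : ℕ) : Matrix (Fin n) (Fin n) ℝ := fun i j =>
  if (i : ℕ) = j then dfun i
  else if (j : ℕ) = (i : ℕ) + 1 then ufun i
  else if (j : ℕ) = (i : ℕ) + 2 then 1
  else 0

lemma sum_delta {n : ℕ} (a : ℕ) (ha : a < n) (f : Fin n → ℝ) :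
    (∑ k : Fin n, if (k : ℕ) = a then f k else 0) = f ⟨a, ha⟩ := by
  rw [Finset.sum_eq_single (⟨a, ha⟩ : Fin n)]
  · simp
  · intro b _ hb
    rw [if_neg]
    simpa [Fin.ext_iff] using hb
  · simp

lemma prod_dfun (n : ℕ) :
    (∏ i : Fin n, dfun i) = ((n : ℝ) + 1) * ((n : ℝ) + 2) ^ 2 * ((n : ℝ) + 3) / 12 := by
  rw [Fin.prod_univ_eq_prod_range (fun i => dfun i)]
  induction n with
  | zero => norm_num
  | succ m ih =>
      rw [Finset.prod_range_succ, ih, dfun]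
      have h1 : (m : ℝ) + 1 ≠ 0 := by positivity
      have h2 : (m : ℝ) + 2 ≠ 0 := by positivity
      push_cast
      field_simp
      ring

set_option maxHeartbeats 2000000 in
theorem stmt_1 (n : ℕ) (hn : 1 ≤ n)
    (T : Matrix (Fin n) (Fin n) ℝ)
    (hT : ∀ i j : Fin n, T i j =
      if (i : ℤ) = (j : ℤ) then 6
      else if |(i : ℤ) - (j : ℤ)| = 1 then -4
      else if |(i : ℤ) - (j : ℤ)| = 2 then 1
      else 0) :
    T.det = ((n : ℝ) + 1) * ((n : ℝ) + 2) ^ 2 * ((n : ℝ) + 3) / 12 := by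
  have habs1 : ∀ x : ℤ, (|x| = 1 ↔ x = 1 ∨ x = -1) := fun x => abs_eq one_pos.le
  have habs2 : ∀ x : ℤ, (|x| = 2 ↔ x = 2 ∨ x = -2) := fun x => abs_eq (by norm_num)
  have key : T = Lmat n * Umat n := by
    ext i j
    rw [Matrix.mul_apply, hT i j]
    obtain ⟨iv, hi⟩ := i
    obtain ⟨jv, hj⟩ := j
    simp only [Fin.val_mk]
    match iv, hi with
    | 0, hi =>
        have hsum : (∑ k : Fin n, Lmat n ⟨0, hi⟩ k * Umat n k ⟨jv, hj⟩)
            = ∑ k : Fin n, if (k : ℕ) = 0 then Umat n k ⟨jv, hj⟩ else 0 := by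
          refine Finset.sum_congr rfl fun k _ => ?_
          simp only [Lmat, Fin.val_mk]
          split_ifs <;> first | ring1 | omega | simp_all
        rw [hsum, sum_delta 0 hi]
        simp only [Umat, Fin.val_mk, dfun, ufun]
        simp only [habs1, habs2]
        split_ifs <;> first | omega | norm_num
    | 1, hi =>
        have h0 : 0 < n := by omega
        have hsum : (∑ k : Fin n, Lmat n ⟨1, hi⟩ k * Umat n k ⟨jv, hj⟩)
            = ∑ k : Fin n, ((if (k : ℕ) = 1 then Umat n k ⟨jv, hj⟩ else 0)
              + (if (k : ℕ) = 0 then lfun 1 * Umat n k ⟨jv, hj⟩ else 0)) := by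
          refine Finset.sum_congr rfl fun k _ => ?_
          simp only [Lmat, Fin.val_mk]
          split_ifs <;> first | ring1 | omega | simp_all
        rw [hsum, Finset.sum_add_distrib, sum_delta 1 hi, sum_delta 0 h0]
        simp only [Umat, Fin.val_mk, dfun, ufun, lfun]
        simp only [habs1, habs2]
        split_ifs <;> first | omega | norm_num
    | m + 2, hi =>
        have h0 : m < n := by omega
        have h1 : m + 1 < n := by omega
        have hsum : (∑ k : Fin n, Lmat n ⟨m + 2, hi⟩ k * Umat n k ⟨jv, hj⟩)
            = ∑ k : Fin n, ((if (k : ℕ) = m + 2 then Umat n k ⟨jv, hj⟩ else 0)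
              + ((if (k : ℕ) = m + 1 then lfun (m + 2) * Umat n k ⟨jv, hj⟩ else 0)
              + (if (k : ℕ) = m then mfun (m + 2) * Umat n k ⟨jv, hj⟩ else 0))) := by
          refine Finset.sum_congr rfl fun k _ => ?_
          simp only [Lmat, Fin.val_mk]
          split_ifs <;> first | ring1 | omega | simp_all
        rw [hsum, Finset.sum_add_distrib, Finset.sum_add_distrib,
          sum_delta (m + 2) hi, sum_delta (m + 1) h1, sum_delta m h0]
        simp only [Umat, Fin.val_mk, dfun, ufun, lfun, mfun]
        simp only [habs1, habs2]
        have hm1 : (m : ℝ) + 1 ≠ 0 := by positivity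
        have hm2 : (m : ℝ) + 2 ≠ 0 := by positivity
        have hm3 : (m : ℝ) + 3 ≠ 0 := by positivity
        have hm4 : (m : ℝ) + 4 ≠ 0 := by positivity
        split_ifs <;> first | omega | (push_cast; field_simp; ring1) | (push_cast; field_simp)
  have hL : (Lmat n).det = 1 := by
    rw [Matrix.det_of_lowerTriangular (Lmat n)]
    · have : ∀ i : Fin n, Lmat n i i = 1 := by
        intro i; simp [Lmat]
      simp [this]
    · intro i j hij
      simp only [OrderDual.toDual_lt_toDual] at hij
      have : (i : ℕ) < j := hij
      simp only [Lmat]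
      split_ifs <;> first | omega | rfl
  have hU : (Umat n).det = ((n : ℝ) + 1) * ((n : ℝ) + 2) ^ 2 * ((n : ℝ) + 3) / 12 := by
    rw [Matrix.det_of_upperTriangular]
    · have : ∀ i : Fin n, Umat n i i = dfun i := by
        intro i; simp [Umat]
      rw [Finset.prod_congr rfl fun i _ => this i]
      exact prod_dfun n
    · intro i j hij
      have : (j : ℕ) < i := hij
      simp only [Umat]
      split_ifs <;> first | omega | rfl
  rw [key, Matrix.det_mul, hL, hU, one_mul]
end

section
/- Let $B_n$ be the $(n+1)\times n$ matrix whose upper $n\times n$ block is the tridiagonal Toeplitz matrix with $-2$ on the diagonal and $1$ on the adjacent diagonals, and whose last row is $(1,0,\ldots,0,1)$. Then $\det(B_n^\top B_n)=(n+1)^3$. -/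
/-!
`B` is minus the Laplacian of the `(n+1)`-cycle with its last column deleted, so its columns sum
to zero: the block above the last row is `-Aₙ`, the negated Cartan matrix of type `A`, and the
last row is `𝟙ᵀAₙ`. Hence `BᵀB = Aₙᵀ (1 + 𝟙𝟙ᵀ) Aₙ`, whose determinant is `det(Aₙ)² (1 + n)` by
the matrix determinant lemma, and `det Aₙ = n + 1` by the tridiagonal recurrence
`det Aₙ₊₂ = 2 det Aₙ₊₁ - det Aₙ`.
-/

open Matrix

theorem abs_natCast_sub_natCast_eq_one_iff (a b : ℕ) :
    |(a : ℤ) - b| = 1 ↔ a + 1 = b ∨ b + 1 = a := by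
  rw [abs_eq zero_le_one]
  omega

theorem Finset.sum_range_ite_add_one_eq {M : Type*} [AddCommMonoid M] (n j : ℕ) (c : M) :
    ∑ i ∈ range n, (if i + 1 = j then c else 0) = if j ≠ 0 ∧ j ≤ n then c else 0 := by
  rcases j with _ | k
  · simp
  · simp only [Nat.add_right_cancel_iff, sum_ite_eq', mem_range]
    exact if_congr (by omega) rfl rfl

namespace Matrix

section

variable {m R : Type*} [Fintype m] [DecidableEq m] [CommRing R]

theorem det_one_add_vecMulVec (u v : m → R) : det (1 + vecMulVec u v) = 1 + v ⬝ᵥ u := by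
  rw [vecMulVec_eq Unit, det_one_add_replicateCol_mul_replicateRow]

theorem det_transpose_mul_self_add_vecMulVec_vecMul (A : Matrix m m R) (u : m → R) :
    det (Aᵀ * A + vecMulVec (u ᵥ* A) (u ᵥ* A)) = det A ^ 2 * (1 + u ⬝ᵥ u) := by
  have hfactor : Aᵀ * A + vecMulVec (u ᵥ* A) (u ᵥ* A) = Aᵀ * (1 + vecMulVec u u) * A := by
    rw [Matrix.mul_add, Matrix.add_mul, Matrix.mul_one, mul_vecMulVec, vecMulVec_mul,
      mulVec_transpose]
  rw [hfactor, det_mul, det_mul, det_transpose, det_one_add_vecMulVec]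
  ring

end

theorem det_transpose_mul_self_of_one_vecMul_eq_zero {R : Type*} [CommRing R] {n : ℕ}
    (B : Matrix (Fin (n + 1)) (Fin n) R) (h : 1 ᵥ* B = 0) :
    det (Bᵀ * B) = (n + 1) * det (B.submatrix Fin.castSucc id) ^ 2 := by
  set A := B.submatrix Fin.castSucc id
  have hlast : B (Fin.last n) = (-1 : Fin n → R) ᵥ* A := by
    ext j
    have hj := congrFun h j
    simp only [vecMul, dotProduct, Fin.sum_univ_castSucc, Pi.one_apply, Pi.neg_apply,
      Pi.zero_apply, one_mul, neg_one_mul, Finset.sum_neg_distrib, A, submatrix_apply, id] at hj ⊢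
    linear_combination hj
  have hsplit : Bᵀ * B = Aᵀ * A + vecMulVec (B (Fin.last n)) (B (Fin.last n)) := by
    ext i j
    simp [A, mul_apply, vecMulVec_apply, Fin.sum_univ_castSucc]
  rw [hsplit, hlast, det_transpose_mul_self_add_vecMulVec_vecMul]
  simp [dotProduct]
  ring

end Matrix

namespace CartanMatrix

theorem A_apply {n : ℕ} (i j : Fin n) :
    A n i j = if i = j then 2 else if (i : ℕ) + 1 = j ∨ (j : ℕ) + 1 = i then -1 else 0 := rfl

theorem A_submatrix_succ_succ (n : ℕ) : (A (n + 1)).submatrix Fin.succ Fin.succ = A n := by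
  ext i j
  simp [A_apply]

theorem det_A_add_two (n : ℕ) : (A (n + 2)).det = 2 * (A (n + 1)).det - (A n).det := by
  have hminor : ((A (n + 2)).submatrix Fin.succ (Fin.succ 0).succAbove).det = -(A n).det := by
    have hcorner : ((A (n + 2)).submatrix Fin.succ (Fin.succ 0).succAbove).submatrix
        Fin.succ Fin.succ = A n := by
      ext i j
      simp [A_apply]
    rw [det_succ_column_zero, Fin.sum_univ_succ, Fin.succAbove_zero, hcorner]
    simp [A_apply, Fin.succ_ne_zero]
  rw [det_succ_row_zero, Fin.sum_univ_succ, Fin.sum_univ_succ, Fin.succAbove_zero,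
    A_submatrix_succ_succ, hminor]
  simp [A_apply, (Fin.succ_ne_zero _).symm]
  ring

theorem det_A (n : ℕ) : (A n).det = n + 1 := by
  induction n using Nat.twoStepInduction with
  | zero => simp
  | one => simp [A_apply]
  | more n ih₀ ih₁ => rw [det_A_add_two, ih₀, ih₁]; push_cast; ring

theorem sum_A_apply {n : ℕ} (j : Fin n) :
    ∑ i, A n i j = (if (j : ℕ) = 0 then 1 else 0) + (if (j : ℕ) + 1 = n then 1 else 0) := by
  have hsplit : ∀ i : Fin n, A n i j = (if (i : ℕ) = j then 2 else 0)
      - (if (i : ℕ) + 1 = j then 1 else 0) - (if (i : ℕ) = j + 1 then 1 else 0) := by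
    intro i
    simp only [A_apply, Fin.ext_iff]
    split_ifs <;> omega
  simp only [hsplit, Finset.sum_sub_distrib]
  rw [Fin.sum_univ_eq_sum_range (fun i => if i = (j : ℕ) then (2 : ℤ) else 0),
    Fin.sum_univ_eq_sum_range (fun i => if i + 1 = (j : ℕ) then (1 : ℤ) else 0),
    Fin.sum_univ_eq_sum_range (fun i => if i = (j : ℕ) + 1 then (1 : ℤ) else 0),
    Finset.sum_range_ite_add_one_eq]
  simp only [Finset.sum_ite_eq', Finset.mem_range]
  have := j.isLt
  split_ifs <;> omega

end CartanMatrix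

theorem stmt_3 (n : ℕ) (hn : 2 ≤ n)
    (B : Matrix (Fin (n + 1)) (Fin n) ℝ)
    (hB : ∀ i : Fin (n + 1), ∀ j : Fin n, B i j =
      if (i : ℤ) = (j : ℤ) then -2
      else if |(i : ℤ) - (j : ℤ)| = 1 then 1
      else if (i : ℕ) = n ∧ (j : ℕ) = 0 then 1
      else 0) :
    (Bᵀ * B).det = ((n : ℝ) + 1) ^ 3 := by
  have htop : B.submatrix Fin.castSucc id = -(CartanMatrix.A n).map (Int.cast : ℤ → ℝ) := by
    ext i j
    have hi := i.isLt
    rw [submatrix_apply, hB]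
    simp [CartanMatrix.A_apply, abs_natCast_sub_natCast_eq_one_iff, Fin.ext_iff]
    split_ifs <;> first | omega | norm_num
  have hlast : ∀ j : Fin n, B (Fin.last n) j = ((∑ i, CartanMatrix.A n i j : ℤ) : ℝ) := by
    intro j
    have hj := j.isLt
    rw [hB, CartanMatrix.sum_A_apply]
    simp only [Fin.val_last, abs_natCast_sub_natCast_eq_one_iff, true_and]
    split_ifs <;> first | omega | norm_num
  have hcol : 1 ᵥ* B = 0 := by
    ext j
    have htop_apply (k : Fin n) : B k.castSucc j = -(CartanMatrix.A n k j : ℝ) :=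
      congrFun (congrFun htop k) j
    simp only [vecMul, dotProduct, Pi.one_apply, one_mul, Fin.sum_univ_castSucc, htop_apply,
      hlast, Finset.sum_neg_distrib, Pi.zero_apply]
    push_cast
    ring
  rw [det_transpose_mul_self_of_one_vecMul_eq_zero B hcol, htop, det_neg, ← Int.cast_det,
    CartanMatrix.det_A]
  push_cast
  rw [mul_pow, ← pow_mul, pow_mul', neg_one_sq, one_pow]
  ring
end

section
/- Let $T_n$ be the $n\times n$ Toeplitz matrix with symbol $|1-t|^6$, i.e., the banded matrix with diagonals $(-1,6,-15,20,-15,6,-1)$ (entry $\binom{6}{3-(j-k)}(-1)^{j-k}$ for $|j-k|\le 3$). Then $\det T_n = \frac{(n+1)(n+2)^2(n+3)^3(n+4)^2(n+5)}{8640}$ for all $n\ge 1$. -/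
noncomputable def aZ (m j : ℤ) : ℝ :=
  if m = 0 then ((j:ℝ)+4)*((j:ℝ)+5)*((j:ℝ)+6)
  else if m = 1 then -3*((j:ℝ)+1)*((j:ℝ)+5)*((j:ℝ)+6)
  else if m = 2 then 3*((j:ℝ)+1)*((j:ℝ)+2)*((j:ℝ)+6)
  else if m = 3 then -(((j:ℝ)+1)*((j:ℝ)+2)*((j:ℝ)+3))
  else 0

noncomputable def pZ (j : ℤ) : ℝ :=
  ((j:ℝ)+1)*((j:ℝ)+2)*((j:ℝ)+3)*((j:ℝ)+4)*((j:ℝ)+5)*((j:ℝ)+6)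

lemma pZ_ne (j : ℤ) (h : 0 ≤ j) : pZ j ≠ 0 := by
  have : (0:ℝ) ≤ (j:ℝ) := by exact_mod_cast h
  unfold pZ; positivity

lemma aZ_out (m j : ℤ) (h : m < 0 ∨ 3 < m) : aZ m j = 0 := by
  unfold aZ
  rw [if_neg (by omega), if_neg (by omega), if_neg (by omega), if_neg (by omega)]

lemma core (i k : ℤ) (hi : 0 ≤ i) (hk : 0 ≤ k) :
    ((if 0 ≤ i - 0 then aZ 0 (i - 0) * (aZ (k - (i - 0)) (i - 0) / pZ (i - 0)) else 0) +
     (if 0 ≤ i - 1 then aZ 1 (i - 1) * (aZ (k - (i - 1)) (i - 1) / pZ (i - 1)) else 0) +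
     (if 0 ≤ i - 2 then aZ 2 (i - 2) * (aZ (k - (i - 2)) (i - 2) / pZ (i - 2)) else 0) +
     (if 0 ≤ i - 3 then aZ 3 (i - 3) * (aZ (k - (i - 3)) (i - 3) / pZ (i - 3)) else 0)) =
    (if |i - k| ≤ 3 then (-1:ℝ)^(i-k) * ((Nat.choose 6 (3 + i - k).toNat : ℕ) : ℝ) else 0) := by
  rcases (by omega : i - k ≤ -4 ∨ i - k = -3 ∨ i - k = -2 ∨ i - k = -1 ∨ i - k = 0 ∨ i - k = 1 ∨ i - k = 2 ∨ i - k = 3 ∨ 4 ≤ i - k) with hd | hd | hd | hd | hd | hd | hd | hd | hd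
  · -- i - k ≤ -4
    rw [aZ_out (k - (i - 0)) (i - 0) (by omega), aZ_out (k - (i - 1)) (i - 1) (by omega),
        aZ_out (k - (i - 2)) (i - 2) (by omega), aZ_out (k - (i - 3)) (i - 3) (by omega),
        if_neg (by rw [abs_le]; omega : ¬ |i - k| ≤ 3)]
    simp
  · -- d = -3
    rw [show k - (i - 0) = (3:ℤ) by omega, show k - (i - 1) = (4:ℤ) by omega,
        show k - (i - 2) = (5:ℤ) by omega, show k - (i - 3) = (6:ℤ) by omega,
        if_pos (show |i - k| ≤ 3 by rw [abs_le]; omega), show (3:ℤ) + i - k = (0:ℤ) by omega,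
        show i - k = (-3:ℤ) by omega,
        show (Nat.choose 6 ((0:ℤ)).toNat) = 1 by decide]
    rcases (by omega : i = 0 ∨ i = 1 ∨ i = 2 ∨ 3 ≤ i) with rfl | rfl | rfl | hi3
    · norm_num [aZ, pZ]
    · norm_num [aZ, pZ]
    · norm_num [aZ, pZ]
    · rw [if_pos (by omega : (0:ℤ) ≤ i - 0), if_pos (by omega : (0:ℤ) ≤ i - 1),
          if_pos (by omega : (0:ℤ) ≤ i - 2), if_pos (by omega : (0:ℤ) ≤ i - 3)]
      have p0 := pZ_ne (i - 0) (by omega)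
      have p1 := pZ_ne (i - 1) (by omega)
      have p2 := pZ_ne (i - 2) (by omega)
      have p3 := pZ_ne (i - 3) (by omega)
      rw [mul_div_assoc', mul_div_assoc', mul_div_assoc', mul_div_assoc',
          div_add_div _ _ p0 p1, div_add_div _ _ (mul_ne_zero p0 p1) p2,
          div_add_div _ _ (mul_ne_zero (mul_ne_zero p0 p1) p2) p3,
          div_eq_iff (mul_ne_zero (mul_ne_zero (mul_ne_zero p0 p1) p2) p3)]
      simp only [aZ, pZ, Int.reduceNeg, Int.reduceEq, reduceIte]
      push_cast
      ring
  · -- d = -2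
    rw [show k - (i - 0) = (2:ℤ) by omega, show k - (i - 1) = (3:ℤ) by omega,
        show k - (i - 2) = (4:ℤ) by omega, show k - (i - 3) = (5:ℤ) by omega,
        if_pos (show |i - k| ≤ 3 by rw [abs_le]; omega), show (3:ℤ) + i - k = (1:ℤ) by omega,
        show i - k = (-2:ℤ) by omega,
        show (Nat.choose 6 ((1:ℤ)).toNat) = 6 by decide]
    rcases (by omega : i = 0 ∨ i = 1 ∨ i = 2 ∨ 3 ≤ i) with rfl | rfl | rfl | hi3
    · norm_num [aZ, pZ]
    · norm_num [aZ, pZ]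
    · norm_num [aZ, pZ]
    · rw [if_pos (by omega : (0:ℤ) ≤ i - 0), if_pos (by omega : (0:ℤ) ≤ i - 1),
          if_pos (by omega : (0:ℤ) ≤ i - 2), if_pos (by omega : (0:ℤ) ≤ i - 3)]
      have p0 := pZ_ne (i - 0) (by omega)
      have p1 := pZ_ne (i - 1) (by omega)
      have p2 := pZ_ne (i - 2) (by omega)
      have p3 := pZ_ne (i - 3) (by omega)
      rw [mul_div_assoc', mul_div_assoc', mul_div_assoc', mul_div_assoc',
          div_add_div _ _ p0 p1, div_add_div _ _ (mul_ne_zero p0 p1) p2,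
          div_add_div _ _ (mul_ne_zero (mul_ne_zero p0 p1) p2) p3,
          div_eq_iff (mul_ne_zero (mul_ne_zero (mul_ne_zero p0 p1) p2) p3)]
      simp only [aZ, pZ, Int.reduceNeg, Int.reduceEq, reduceIte]
      push_cast
      ring
  · -- d = -1
    rw [show k - (i - 0) = (1:ℤ) by omega, show k - (i - 1) = (2:ℤ) by omega,
        show k - (i - 2) = (3:ℤ) by omega, show k - (i - 3) = (4:ℤ) by omega,
        if_pos (show |i - k| ≤ 3 by rw [abs_le]; omega), show (3:ℤ) + i - k = (2:ℤ) by omega,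
        show i - k = (-1:ℤ) by omega,
        show (Nat.choose 6 ((2:ℤ)).toNat) = 15 by decide]
    rcases (by omega : i = 0 ∨ i = 1 ∨ i = 2 ∨ 3 ≤ i) with rfl | rfl | rfl | hi3
    · norm_num [aZ, pZ]
    · norm_num [aZ, pZ]
    · norm_num [aZ, pZ]
    · rw [if_pos (by omega : (0:ℤ) ≤ i - 0), if_pos (by omega : (0:ℤ) ≤ i - 1),
          if_pos (by omega : (0:ℤ) ≤ i - 2), if_pos (by omega : (0:ℤ) ≤ i - 3)]
      have p0 := pZ_ne (i - 0) (by omega)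
      have p1 := pZ_ne (i - 1) (by omega)
      have p2 := pZ_ne (i - 2) (by omega)
      have p3 := pZ_ne (i - 3) (by omega)
      rw [mul_div_assoc', mul_div_assoc', mul_div_assoc', mul_div_assoc',
          div_add_div _ _ p0 p1, div_add_div _ _ (mul_ne_zero p0 p1) p2,
          div_add_div _ _ (mul_ne_zero (mul_ne_zero p0 p1) p2) p3,
          div_eq_iff (mul_ne_zero (mul_ne_zero (mul_ne_zero p0 p1) p2) p3)]
      simp only [aZ, pZ, Int.reduceNeg, Int.reduceEq, reduceIte]
      push_cast
      ring
  · -- d = 0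
    rw [show k - (i - 0) = (0:ℤ) by omega, show k - (i - 1) = (1:ℤ) by omega,
        show k - (i - 2) = (2:ℤ) by omega, show k - (i - 3) = (3:ℤ) by omega,
        if_pos (show |i - k| ≤ 3 by rw [abs_le]; omega), show (3:ℤ) + i - k = (3:ℤ) by omega,
        show i - k = (0:ℤ) by omega,
        show (Nat.choose 6 ((3:ℤ)).toNat) = 20 by decide]
    rcases (by omega : i = 0 ∨ i = 1 ∨ i = 2 ∨ 3 ≤ i) with rfl | rfl | rfl | hi3
    · norm_num [aZ, pZ]
    · norm_num [aZ, pZ]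
    · norm_num [aZ, pZ]
    · rw [if_pos (by omega : (0:ℤ) ≤ i - 0), if_pos (by omega : (0:ℤ) ≤ i - 1),
          if_pos (by omega : (0:ℤ) ≤ i - 2), if_pos (by omega : (0:ℤ) ≤ i - 3)]
      have p0 := pZ_ne (i - 0) (by omega)
      have p1 := pZ_ne (i - 1) (by omega)
      have p2 := pZ_ne (i - 2) (by omega)
      have p3 := pZ_ne (i - 3) (by omega)
      rw [mul_div_assoc', mul_div_assoc', mul_div_assoc', mul_div_assoc',
          div_add_div _ _ p0 p1, div_add_div _ _ (mul_ne_zero p0 p1) p2,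
          div_add_div _ _ (mul_ne_zero (mul_ne_zero p0 p1) p2) p3,
          div_eq_iff (mul_ne_zero (mul_ne_zero (mul_ne_zero p0 p1) p2) p3)]
      simp only [aZ, pZ, Int.reduceNeg, Int.reduceEq, reduceIte]
      push_cast
      ring
  · -- d = 1
    rw [show k - (i - 0) = (-1:ℤ) by omega, show k - (i - 1) = (0:ℤ) by omega,
        show k - (i - 2) = (1:ℤ) by omega, show k - (i - 3) = (2:ℤ) by omega,
        if_pos (show |i - k| ≤ 3 by rw [abs_le]; omega), show (3:ℤ) + i - k = (4:ℤ) by omega,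
        show i - k = (1:ℤ) by omega,
        show (Nat.choose 6 ((4:ℤ)).toNat) = 15 by decide]
    rcases (by omega : i = 0 ∨ i = 1 ∨ i = 2 ∨ 3 ≤ i) with rfl | rfl | rfl | hi3
    · exact absurd hk (by omega)
    · norm_num [aZ, pZ]
    · norm_num [aZ, pZ]
    · rw [if_pos (by omega : (0:ℤ) ≤ i - 0), if_pos (by omega : (0:ℤ) ≤ i - 1),
          if_pos (by omega : (0:ℤ) ≤ i - 2), if_pos (by omega : (0:ℤ) ≤ i - 3)]
      have p0 := pZ_ne (i - 0) (by omega)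
      have p1 := pZ_ne (i - 1) (by omega)
      have p2 := pZ_ne (i - 2) (by omega)
      have p3 := pZ_ne (i - 3) (by omega)
      rw [mul_div_assoc', mul_div_assoc', mul_div_assoc', mul_div_assoc',
          div_add_div _ _ p0 p1, div_add_div _ _ (mul_ne_zero p0 p1) p2,
          div_add_div _ _ (mul_ne_zero (mul_ne_zero p0 p1) p2) p3,
          div_eq_iff (mul_ne_zero (mul_ne_zero (mul_ne_zero p0 p1) p2) p3)]
      simp only [aZ, pZ, Int.reduceNeg, Int.reduceEq, reduceIte]
      push_cast
      ring
  · -- d = 2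
    rw [show k - (i - 0) = (-2:ℤ) by omega, show k - (i - 1) = (-1:ℤ) by omega,
        show k - (i - 2) = (0:ℤ) by omega, show k - (i - 3) = (1:ℤ) by omega,
        if_pos (show |i - k| ≤ 3 by rw [abs_le]; omega), show (3:ℤ) + i - k = (5:ℤ) by omega,
        show i - k = (2:ℤ) by omega,
        show (Nat.choose 6 ((5:ℤ)).toNat) = 6 by decide]
    rcases (by omega : i = 0 ∨ i = 1 ∨ i = 2 ∨ 3 ≤ i) with rfl | rfl | rfl | hi3
    · exact absurd hk (by omega)
    · exact absurd hk (by omega)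
    · norm_num [aZ, pZ]
    · rw [if_pos (by omega : (0:ℤ) ≤ i - 0), if_pos (by omega : (0:ℤ) ≤ i - 1),
          if_pos (by omega : (0:ℤ) ≤ i - 2), if_pos (by omega : (0:ℤ) ≤ i - 3)]
      have p0 := pZ_ne (i - 0) (by omega)
      have p1 := pZ_ne (i - 1) (by omega)
      have p2 := pZ_ne (i - 2) (by omega)
      have p3 := pZ_ne (i - 3) (by omega)
      rw [mul_div_assoc', mul_div_assoc', mul_div_assoc', mul_div_assoc',
          div_add_div _ _ p0 p1, div_add_div _ _ (mul_ne_zero p0 p1) p2,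
          div_add_div _ _ (mul_ne_zero (mul_ne_zero p0 p1) p2) p3,
          div_eq_iff (mul_ne_zero (mul_ne_zero (mul_ne_zero p0 p1) p2) p3)]
      simp only [aZ, pZ, Int.reduceNeg, Int.reduceEq, reduceIte]
      push_cast
      ring
  · -- d = 3
    rw [show k - (i - 0) = (-3:ℤ) by omega, show k - (i - 1) = (-2:ℤ) by omega,
        show k - (i - 2) = (-1:ℤ) by omega, show k - (i - 3) = (0:ℤ) by omega,
        if_pos (show |i - k| ≤ 3 by rw [abs_le]; omega), show (3:ℤ) + i - k = (6:ℤ) by omega,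
        show i - k = (3:ℤ) by omega,
        show (Nat.choose 6 ((6:ℤ)).toNat) = 1 by decide]
    rcases (by omega : i = 0 ∨ i = 1 ∨ i = 2 ∨ 3 ≤ i) with rfl | rfl | rfl | hi3
    · exact absurd hk (by omega)
    · exact absurd hk (by omega)
    · exact absurd hk (by omega)
    · rw [if_pos (by omega : (0:ℤ) ≤ i - 0), if_pos (by omega : (0:ℤ) ≤ i - 1),
          if_pos (by omega : (0:ℤ) ≤ i - 2), if_pos (by omega : (0:ℤ) ≤ i - 3)]
      have p0 := pZ_ne (i - 0) (by omega)
      have p1 := pZ_ne (i - 1) (by omega)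
      have p2 := pZ_ne (i - 2) (by omega)
      have p3 := pZ_ne (i - 3) (by omega)
      rw [mul_div_assoc', mul_div_assoc', mul_div_assoc', mul_div_assoc',
          div_add_div _ _ p0 p1, div_add_div _ _ (mul_ne_zero p0 p1) p2,
          div_add_div _ _ (mul_ne_zero (mul_ne_zero p0 p1) p2) p3,
          div_eq_iff (mul_ne_zero (mul_ne_zero (mul_ne_zero p0 p1) p2) p3)]
      simp only [aZ, pZ, Int.reduceNeg, Int.reduceEq, reduceIte]
      push_cast
      ring
  · -- 4 ≤ i - k
    rw [aZ_out (k - (i - 0)) (i - 0) (by omega), aZ_out (k - (i - 1)) (i - 1) (by omega),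
        aZ_out (k - (i - 2)) (i - 2) (by omega), aZ_out (k - (i - 3)) (i - 3) (by omega),
        if_neg (by rw [abs_le]; omega : ¬ |i - k| ≤ 3)]
    simp


lemma pick {n : ℕ} (v : ℤ) (hv : v < n) (c : ℝ) :
    (∑ j : Fin n, if (j:ℤ) = v then c else 0) = if 0 ≤ v then c else 0 := by
  by_cases h : 0 ≤ v
  · rw [if_pos h]
    have hvn : v.toNat < n := by omega
    rw [Finset.sum_eq_single (⟨v.toNat, hvn⟩ : Fin n)]
    · rw [if_pos (by simp only [Fin.val_mk]; omega)]
    · intro b _ hb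
      rw [if_neg]
      intro hbv
      exact hb (Fin.ext (by simp only [Fin.val_mk]; omega))
    · intro hmem; exact absurd (Finset.mem_univ _) hmem
  · rw [if_neg h]
    apply Finset.sum_eq_zero
    intro j _
    rw [if_neg]
    intro hj
    omega

lemma entry {n : ℕ} (i k : Fin n) :
    (∑ j : Fin n, aZ ((i:ℤ) - (j:ℤ)) (j:ℤ) * (aZ ((k:ℤ) - (j:ℤ)) (j:ℤ) / pZ (j:ℤ)))
    = if |(i:ℤ) - (k:ℤ)| ≤ 3 then
        (-1:ℝ)^((i:ℤ)-(k:ℤ)) * ((Nat.choose 6 (3 + (i:ℤ) - (k:ℤ)).toNat : ℕ) : ℝ)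
      else 0 := by
  have hsum : ∀ j : Fin n,
      aZ ((i:ℤ) - (j:ℤ)) (j:ℤ) * (aZ ((k:ℤ) - (j:ℤ)) (j:ℤ) / pZ (j:ℤ)) =
      (if (j:ℤ) = (i:ℤ) - 0 then aZ 0 ((i:ℤ) - 0) * (aZ ((k:ℤ) - ((i:ℤ) - 0)) ((i:ℤ) - 0) / pZ ((i:ℤ) - 0)) else 0) +
      (if (j:ℤ) = (i:ℤ) - 1 then aZ 1 ((i:ℤ) - 1) * (aZ ((k:ℤ) - ((i:ℤ) - 1)) ((i:ℤ) - 1) / pZ ((i:ℤ) - 1)) else 0) +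
      (if (j:ℤ) = (i:ℤ) - 2 then aZ 2 ((i:ℤ) - 2) * (aZ ((k:ℤ) - ((i:ℤ) - 2)) ((i:ℤ) - 2) / pZ ((i:ℤ) - 2)) else 0) +
      (if (j:ℤ) = (i:ℤ) - 3 then aZ 3 ((i:ℤ) - 3) * (aZ ((k:ℤ) - ((i:ℤ) - 3)) ((i:ℤ) - 3) / pZ ((i:ℤ) - 3)) else 0) := by
    intro j
    rcases (by omega : (j:ℤ) = (i:ℤ) - 0 ∨ (j:ℤ) = (i:ℤ) - 1 ∨ (j:ℤ) = (i:ℤ) - 2 ∨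
        (j:ℤ) = (i:ℤ) - 3 ∨ ((i:ℤ) - (j:ℤ) < 0 ∨ 3 < (i:ℤ) - (j:ℤ))) with h|h|h|h|h
    · rw [if_pos h, if_neg (by omega), if_neg (by omega), if_neg (by omega), ← h,
          show (i:ℤ) - (j:ℤ) = 0 by omega]
      ring
    · rw [if_neg (by omega), if_pos h, if_neg (by omega), if_neg (by omega), ← h,
          show (i:ℤ) - (j:ℤ) = 1 by omega]
      ring
    · rw [if_neg (by omega), if_neg (by omega), if_pos h, if_neg (by omega), ← h,
          show (i:ℤ) - (j:ℤ) = 2 by omega]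
      ring
    · rw [if_neg (by omega), if_neg (by omega), if_neg (by omega), if_pos h, ← h,
          show (i:ℤ) - (j:ℤ) = 3 by omega]
      ring
    · rw [if_neg (by omega), if_neg (by omega), if_neg (by omega), if_neg (by omega),
          aZ_out ((i:ℤ) - (j:ℤ)) (j:ℤ) h]
      simp
  rw [Finset.sum_congr rfl (fun j _ => hsum j), Finset.sum_add_distrib,
      Finset.sum_add_distrib, Finset.sum_add_distrib,
      pick _ (by have := i.isLt; omega) _, pick _ (by have := i.isLt; omega) _,
      pick _ (by have := i.isLt; omega) _, pick _ (by have := i.isLt; omega) _]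
  exact core (i:ℤ) (k:ℤ) (by omega) (by omega)

lemma prodform (n : ℕ) :
    (∏ t ∈ Finset.range n, (aZ 0 (t:ℤ) * (aZ 0 (t:ℤ) / pZ (t:ℤ)))) =
    ((n : ℝ) + 1) * ((n : ℝ) + 2) ^ 2 * ((n : ℝ) + 3) ^ 3 * ((n : ℝ) + 4) ^ 2 *
      ((n : ℝ) + 5) / 8640 := by
  induction n with
  | zero => norm_num
  | succ m ih =>
    rw [Finset.prod_range_succ, ih]
    have h0 : (0:ℝ) ≤ (m:ℝ) := Nat.cast_nonneg m
    have p := pZ_ne (m:ℤ) (by omega)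
    simp only [aZ, pZ, if_pos rfl] at p ⊢
    push_cast at p ⊢
    have n1 : (m:ℝ) + 1 ≠ 0 := by positivity
    have n2 : (m:ℝ) + 2 ≠ 0 := by positivity
    have n3 : (m:ℝ) + 3 ≠ 0 := by positivity
    have n4 : (m:ℝ) + 4 ≠ 0 := by positivity
    have n5 : (m:ℝ) + 5 ≠ 0 := by positivity
    have n6 : (m:ℝ) + 6 ≠ 0 := by positivity
    field_simp
    ring

theorem stmt_9 (n : ℕ) (hn : 1 ≤ n)
    (T : Matrix (Fin n) (Fin n) ℝ)
    (hT : ∀ j k : Fin n, T j k =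
      if |(j : ℤ) - (k : ℤ)| ≤ 3 then
        (-1 : ℝ) ^ ((j : ℤ) - (k : ℤ)) * (Nat.choose 6 (3 + (j : ℤ) - (k : ℤ)).toNat : ℝ)
      else 0) :
    T.det = ((n : ℝ) + 1) * ((n : ℝ) + 2) ^ 2 * ((n : ℝ) + 3) ^ 3 * ((n : ℝ) + 4) ^ 2 *
      ((n : ℝ) + 5) / 8640 := by
  have key : T = (Matrix.of fun i j : Fin n => aZ ((i:ℤ) - (j:ℤ)) (j:ℤ)) *
      (Matrix.of fun j k : Fin n => aZ ((k:ℤ) - (j:ℤ)) (j:ℤ) / pZ (j:ℤ)) := by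
    ext i k
    rw [Matrix.mul_apply, hT]
    simp only [Matrix.of_apply]
    exact (entry i k).symm
  rw [key, Matrix.det_mul,
      Matrix.det_of_lowerTriangular _ (by
        intro i j hij
        simp only [Matrix.of_apply]
        exact aZ_out _ _ (Or.inl (by
          have : (i : Fin n) < j := hij
          have := Fin.lt_iff_val_lt_val.mp this
          omega))),
      Matrix.det_of_upperTriangular (by
        intro i j hij
        simp only [Matrix.of_apply]
        rw [aZ_out _ _ (Or.inl (by
          have : (j : Fin n) < i := hij
          have := Fin.lt_iff_val_lt_val.mp this
          omega)), zero_div])]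
  simp only [Matrix.of_apply, sub_self]
  rw [← Finset.prod_mul_distrib,
      Fin.prod_univ_eq_prod_range (fun t : ℕ => aZ 0 (t:ℤ) * (aZ 0 (t:ℤ) / pZ (t:ℤ))) n]
  exact prodform n
end

section
/- Let $T_n$ be the $n\times n$ pentadiagonal Toeplitz matrix with diagonals $(1,-4,6,-4,1)$ (symbol $|1-t|^4$). Then the $(1,n)$ entry of $T_n^{-1}$ equals $\frac{2n}{(n+2)(n+3)}$ and the $(n,n)$ entry of $T_n^{-1}$ equals $\frac{n(n+1)}{(n+2)(n+3)}$. -/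
/-!
The last column of `T_n⁻¹` is the solution `v` of `T_n v = e_n`. Padding a vector with zeros
turns `T_n v` into the centred fourth difference of the padded sequence, so `v` is found by
looking for a cubic `p` (fourth differences of cubics vanish) with `p(-1) = p(0) = p(n+1) = 0`
and `p(n+2) = -1`, the last value producing the `1` in row `n` once it is cut off:
`p(i) = i (i+1) (n+1-i) / ((n+2)(n+3))` (1-indexed). Its values at `i = 1` and `i = n` are the
two entries.

Invertibility follows the same way: if `T_n x = 0`, the fourth differences of the padded sequence
centred at `1, …, n` vanish, so on `[-1, n+2]` it agrees with a cubic, and a cubic vanishing at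
`-1, 0, n+1, n+2` is zero.
-/

open Matrix

def extendByZero {α : Type*} [Zero α] {n : ℕ} (x : Fin n → α) (k : ℤ) : α :=
  if h : 0 ≤ k ∧ k < n then x ⟨k.toNat, by omega⟩ else 0

section extendByZero

variable {α : Type*} [Zero α] {n : ℕ}

@[simp]
theorem extendByZero_coe (x : Fin n → α) (i : Fin n) : extendByZero x i = x i := by
  simp [extendByZero]

theorem extendByZero_eq_zero {x : Fin n → α} {k : ℤ} (hk : k < 0 ∨ n ≤ k) :
    extendByZero x k = 0 :=
  dif_neg (by omega)

theorem exists_coe_eq_of_extendByZero_ne_zero {x : Fin n → α} {k : ℤ}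
    (hk : extendByZero x k ≠ 0) : ∃ i : Fin n, (i : ℤ) = k := by
  by_contra! h
  refine hk (extendByZero_eq_zero ?_)
  by_contra! h'
  exact h ⟨k.toNat, by omega⟩ (Int.toNat_of_nonneg h'.1)

end extendByZero

theorem mulVec_apply_eq_sum_of_band {R : Type*} [NonUnitalNonAssocSemiring R] {n r : ℕ}
    {T : Matrix (Fin n) (Fin n) R} {a : ℤ → R} (hT : ∀ i j : Fin n, T i j = a (i - j))
    (ha : ∀ d, (r : ℤ) < |d| → a d = 0) (x : Fin n → R) (i : Fin n) :
    (T *ᵥ x) i = ∑ d ∈ Finset.Icc (-r : ℤ) r, a d * extendByZero x (i - d) := by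
  rw [mulVec, dotProduct]
  refine Finset.sum_bij_ne_zero (fun j _ _ => (i : ℤ) - j) (fun j _ hj => ?_)
    (fun j₁ _ _ j₂ _ _ h => Fin.ext (by omega)) (fun d _ hd => ?_) (fun j _ _ => ?_)
  · rw [hT] at hj
    have : |(i : ℤ) - j| ≤ r := not_lt.mp fun h => hj (by rw [ha _ h, zero_mul])
    rw [Finset.mem_Icc]
    constructor <;> linarith [abs_le.mp this]
  · obtain ⟨j, hj⟩ := exists_coe_eq_of_extendByZero_ne_zero (right_ne_zero_of_mul hd)
    refine ⟨j, Finset.mem_univ _, ?_, by omega⟩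
    rw [hT, show (i : ℤ) - j = d by omega]
    rwa [← hj, extendByZero_coe] at hd
  · simp [hT]

def pentadiagonalToeplitz (R : Type*) [Ring R] (n : ℕ) : Matrix (Fin n) (Fin n) R :=
  Matrix.of fun i j =>
    if (i : ℤ) = (j : ℤ) then 6
    else if |(i : ℤ) - (j : ℤ)| = 1 then -4
    else if |(i : ℤ) - (j : ℤ)| = 2 then 1
    else 0

def centralFourthDiff {R : Type*} [Ring R] (u : ℤ → R) (k : ℤ) : R :=
  u (k - 2) - 4 * u (k - 1) + 6 * u k - 4 * u (k + 1) + u (k + 2)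

theorem pentadiagonalToeplitz_mulVec_apply {R : Type*} [Ring R] {n : ℕ} (x : Fin n → R)
    (i : Fin n) :
    (pentadiagonalToeplitz R n *ᵥ x) i = centralFourthDiff (extendByZero x) i := by
  let a : ℤ → R := fun d =>
    if d = 0 then 6 else if |d| = 1 then -4 else if |d| = 2 then 1 else 0
  have hTa : ∀ i j : Fin n, pentadiagonalToeplitz R n i j = a (i - j) := fun i j => by
    simp only [pentadiagonalToeplitz, of_apply, a, sub_eq_zero]
  have ha : ∀ d, ((2 : ℕ) : ℤ) < |d| → a d = 0 := fun d hd => by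
    have hd0 : d ≠ 0 := by rintro rfl; simp at hd
    simp only [a]
    rw [if_neg hd0, if_neg (by omega), if_neg (by omega)]
  rw [mulVec_apply_eq_sum_of_band hTa ha,
    show Finset.Icc (-((2 : ℕ) : ℤ)) (2 : ℕ) = {-2, -1, 0, 1, 2} by rfl,
    Finset.sum_insert (by decide), Finset.sum_insert (by decide), Finset.sum_insert (by decide),
    Finset.sum_insert (by decide), Finset.sum_singleton]
  simp only [a, centralFourthDiff, Int.reduceNeg, neg_eq_zero, OfNat.ofNat_ne_zero, ↓reduceIte,
    abs_neg, Nat.abs_ofNat, OfNat.ofNat_ne_one, sub_neg_eq_add, one_mul, one_ne_zero, abs_one,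
    neg_mul, sub_zero, extendByZero_coe]
  abel

theorem eqOn_of_centralFourthDiff_eq_zero {R : Type*} [CommRing R] {n : ℕ} {u w : ℤ → R}
    (hu : ∀ k : ℤ, 0 ≤ k → k < n → centralFourthDiff u k = 0)
    (hw : ∀ k : ℤ, 0 ≤ k → k < n → centralFourthDiff w k = 0)
    (hinit : ∀ k : ℤ, -2 ≤ k → k ≤ 1 → u k = w k) :
    ∀ k : ℤ, -2 ≤ k → k ≤ n + 1 → u k = w k := by
  suffices h : ∀ m : ℕ, m ≤ n + 3 → u (m - 2) = w (m - 2) by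
    intro k hk₁ hk₂
    have := h (k + 2).toNat (by omega)
    rwa [Int.toNat_of_nonneg (by omega), add_sub_cancel_right] at this
  intro m
  induction m using Nat.strong_induction_on with
  | _ m ih =>
    intro hm
    rcases (by omega : m < 4 ∨ 4 ≤ m) with hm4 | hm4
    · exact hinit _ (by omega) (by omega)
    · obtain ⟨k, rfl⟩ : ∃ k, m = k + 4 := ⟨m - 4, by omega⟩
      have e := fun j (hj : j < 4) => ih (k + j) (by omega) (by omega)
      have hu' := hu k (by omega) (by omega)
      have hw' := hw k (by omega) (by omega)
      simp only [centralFourthDiff] at hu' hw'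
      push_cast at e ⊢
      have e0 := e 0 (by norm_num)
      have e1 := e 1 (by norm_num)
      have e2 := e 2 (by norm_num)
      have e3 := e 3 (by norm_num)
      ring_nf at e0 e1 e2 e3 hu' hw' ⊢
      linear_combination hu' - hw' - e0 + 4 * e1 - 6 * e2 + 4 * e3

theorem pentadiagonalToeplitz_mulVec_injective (K : Type*) [Field K] [CharZero K] (n : ℕ) :
    Function.Injective (pentadiagonalToeplitz K n *ᵥ ·) := by
  suffices h : ∀ x, pentadiagonalToeplitz K n *ᵥ x = 0 → x = 0 from
    fun x y hxy => sub_eq_zero.mp (h _ (by simp only [mulVec_sub, hxy, sub_self]))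
  intro x hx
  -- the cubic through the padded values at `-2, -1, 0, 1`
  set β := extendByZero x 0 / 2
  set α := extendByZero x 1 / 6 - β
  set q : ℤ → K := fun k => (k + 1) * (k + 2) * (α * k + β)
  have hx' : ∀ k : ℤ, 0 ≤ k → k < n → centralFourthDiff (extendByZero x) k = 0 :=
    fun k hk₀ hkn => by
      have := pentadiagonalToeplitz_mulVec_apply x ⟨k.toNat, by omega⟩
      rwa [hx, Fin.val_mk, Int.toNat_of_nonneg hk₀, eq_comm] at this
  have hq : ∀ k : ℤ, centralFourthDiff q k = 0 := fun k => by
    simp only [q, centralFourthDiff]; push_cast; ring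
  have hinit : ∀ k : ℤ, -2 ≤ k → k ≤ 1 → extendByZero x k = q k := fun k hk₁ hk₂ => by
    obtain rfl | rfl | rfl | rfl : k = -2 ∨ k = -1 ∨ k = 0 ∨ k = 1 := by omega
    · simp [q, extendByZero_eq_zero]
    · simp [q, extendByZero_eq_zero]
    · simp only [q, α, β]; push_cast; ring
    · simp only [q, α, β]; push_cast; ring
  have hxq := eqOn_of_centralFourthDiff_eq_zero hx' (fun k _ _ => hq k) hinit
  have hαβ : α = 0 ∧ β = 0 := by
    have h₁ := hxq n (by omega) (by omega)
    have h₂ := hxq (n + 1) (by omega) (by omega)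
    rw [extendByZero_eq_zero (by omega), eq_comm] at h₁ h₂
    simp only [q] at h₁ h₂
    push_cast at h₁ h₂
    have h₁' : α * n + β = 0 := by
      simpa [mul_eq_zero, (by norm_cast : ((n : K) + 1) ≠ 0),
        (by norm_cast : ((n : K) + 2) ≠ 0)] using h₁
    have h₂' : α * (n + 1) + β = 0 := by
      simpa [mul_eq_zero, (by norm_cast : ((n : K) + 1 + 1) ≠ 0),
        (by norm_cast : ((n : K) + 1 + 2) ≠ 0)] using h₂
    exact ⟨by linear_combination h₂' - h₁', by linear_combination (n + 1 : K) * h₁' - n * h₂'⟩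
  ext i
  rw [← extendByZero_coe x i, hxq i (by omega) (by omega)]
  simp [q, hαβ]

theorem isUnit_det_pentadiagonalToeplitz (K : Type*) [Field K] [CharZero K] (n : ℕ) :
    IsUnit (pentadiagonalToeplitz K n).det :=
  (isUnit_iff_isUnit_det _).mp
    (mulVec_injective_iff_isUnit.mp (pentadiagonalToeplitz_mulVec_injective K n))

-- Indices are 0-based: the values at `k = 0, …, n - 1` form the last column of the inverse.
def lastColumn (K : Type*) [Field K] (n : ℕ) (k : ℤ) : K :=
  (k + 1) * (k + 2) * (n - k) / ((n + 2) * (n + 3))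

theorem pentadiagonalToeplitz_mulVec_lastColumn (K : Type*) [Field K] [CharZero K] {n : ℕ}
    (j : Fin n) (hj : (j : ℕ) + 1 = n) :
    pentadiagonalToeplitz K n *ᵥ (fun i => lastColumn K n i) = Pi.single j 1 := by
  have hn₂ : (n : K) + 2 ≠ 0 := by norm_cast
  have hn₃ : (n : K) + 3 ≠ 0 := by norm_cast
  -- the cubic vanishes at `-2, -1, n` and equals `-1` at `n + 1`, where the padding puts `0`
  have hext : ∀ k : ℤ, -2 ≤ k → k ≤ n + 1 →
      extendByZero (fun i : Fin n => lastColumn K n i) k =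
        lastColumn K n k + if k = n + 1 then 1 else 0 := fun k hk₁ hk₂ => by
    rcases (by omega : (0 ≤ k ∧ k < n) ∨ k = -2 ∨ k = -1 ∨ k = n ∨ k = n + 1)
      with ⟨hk₀, hkn⟩ | rfl | rfl | rfl | rfl
    · have := extendByZero_coe (fun i : Fin n => lastColumn K n i) ⟨k.toNat, by omega⟩
      simp only [Int.toNat_of_nonneg hk₀] at this
      rw [this, if_neg (by omega), add_zero]
    all_goals rw [extendByZero_eq_zero (by omega), lastColumn]
    · rw [if_neg (by omega)]; push_cast; ring
    · rw [if_neg (by omega)]; push_cast; ring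
    · rw [if_neg (by omega)]; push_cast; ring
    · rw [if_pos rfl]; push_cast; field_simp; ring
  have hcubic : ∀ k, centralFourthDiff (lastColumn K n) k = 0 := fun k => by
    simp only [centralFourthDiff, lastColumn]; push_cast; ring
  ext i
  have hi := i.isLt
  have hlast : i = j ↔ (i : ℤ) + 2 = n + 1 := by rw [Fin.ext_iff]; omega
  have hc := hcubic i
  rw [pentadiagonalToeplitz_mulVec_apply, Pi.single_apply]
  simp only [hlast, centralFourthDiff] at hc ⊢
  rw [hext (i - 2) (by omega) (by omega), hext (i - 1) (by omega) (by omega),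
    hext i (by omega) (by omega), hext (i + 1) (by omega) (by omega),
    hext (i + 2) (by omega) (by omega), if_neg (by omega), if_neg (by omega), if_neg (by omega),
    if_neg (by omega)]
  split_ifs <;> linear_combination hc

theorem stmt_11 (n : ℕ) (hn : 1 ≤ n)
    (T : Matrix (Fin n) (Fin n) ℝ)
    (hT : ∀ i j : Fin n, T i j =
      if (i : ℤ) = (j : ℤ) then 6
      else if |(i : ℤ) - (j : ℤ)| = 1 then -4
      else if |(i : ℤ) - (j : ℤ)| = 2 then 1
      else 0) :
    T⁻¹ ⟨0, by omega⟩ ⟨n - 1, by omega⟩ = 2 * (n : ℝ) / (((n : ℝ) + 2) * ((n : ℝ) + 3)) ∧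
    T⁻¹ ⟨n - 1, by omega⟩ ⟨n - 1, by omega⟩ =
      (n : ℝ) * ((n : ℝ) + 1) / (((n : ℝ) + 2) * ((n : ℝ) + 3)) := by
  obtain rfl : T = pentadiagonalToeplitz ℝ n := Matrix.ext hT
  have hcol : (pentadiagonalToeplitz ℝ n)⁻¹ *ᵥ Pi.single ⟨n - 1, by omega⟩ 1 =
      fun i : Fin n => lastColumn ℝ n i := by
    rw [← pentadiagonalToeplitz_mulVec_lastColumn ℝ _ (Nat.sub_add_cancel hn), mulVec_mulVec,
      nonsing_inv_mul _ (isUnit_det_pentadiagonalToeplitz ℝ n), one_mulVec]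
  rw [mulVec_single_one] at hcol
  have hfirst := congrFun hcol ⟨0, by omega⟩
  have hlast := congrFun hcol ⟨n - 1, by omega⟩
  simp only [col_apply, lastColumn] at hfirst hlast
  rw [hfirst, hlast]
  push_cast [Nat.cast_sub hn]
  constructor <;> ring
end
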